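/- Let 0 < α < 1. Applying the complementary kernel p_n (defined by p_0 = 1, p_n = Σ_{j=1}^{n}(a_{j−1}−a_j)p_{n−j}, a_i = (i+1)^{1−α} − i^{1−α}) to the L1 weights telescopes exactly: for any real sequence y_0, …, y_n, Σ_{j=1}^{n} p_{n−j} Σ_{k=1}^{j} a_{j−k}(y_k − y_{k−1}) = y_n − y_0. -/

import Mathlib

/-!
With `c m = ∑_{i + j = m} a i * p j`, the recursion for `p` reads
`p (m + 1) = c m - (c (m + 1) - a 0 * p (m + 1))`, so `a 0 = 1` forces `c (m + 1) = c m = c 0 = 1`: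
this is the complementary relation. After exchanging the two sums, the coefficient of
`y k - y (k - 1)` is `c (n - k) = 1`, and what is left telescopes.
-/

noncomputable def L1a (α : ℝ) (i : ℕ) : ℝ := ((i : ℝ) + 1) ^ (1 - α) - (i : ℝ) ^ (1 - α)

noncomputable def L1p (α : ℝ) : ℕ → ℝ
  | 0 => 1
  | n + 1 => ∑ j : Fin (n + 1), (L1a α j - L1a α (j + 1)) * L1p α (n - j)

open Finset

theorem sum_antidiagonal_mul_eq_one {R : Type*} [CommRing R] {a p : ℕ → R} (ha : a 0 = 1)
    (hp0 : p 0 = 1)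
    (hp : ∀ m, p (m + 1) = ∑ x ∈ antidiagonal m, (a x.1 - a (x.1 + 1)) * p x.2) (m : ℕ) :
    ∑ x ∈ antidiagonal m, a x.1 * p x.2 = 1 := by
  induction m with
  | zero => simp [ha, hp0]
  | succ m ih =>
    have hp' : p (m + 1) = 1 - ∑ x ∈ antidiagonal m, a (x.1 + 1) * p x.2 := by
      simp only [hp, sub_mul, sum_sub_distrib, ih]
    rw [Nat.sum_antidiagonal_succ, ha, one_mul, hp', sub_add_cancel]

theorem sum_Icc_eq_sum_antidiagonal {M : Type*} [AddCommMonoid M] (f : ℕ → ℕ → M) {k n : ℕ}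
    (hkn : k ≤ n) :
    ∑ j ∈ Icc k n, f (j - k) (n - j) = ∑ x ∈ antidiagonal (n - k), f x.1 x.2 := by
  refine sum_nbij' (fun j ↦ (j - k, n - j)) (fun x ↦ x.1 + k) ?_ ?_ ?_ ?_ fun _ _ ↦ rfl <;>
    simp only [mem_Icc, HasAntidiagonal.mem_antidiagonal, Prod.forall, Prod.mk.injEq] <;> omega

theorem sum_Icc_one_sub_pred_eq_sub {G : Type*} [AddCommGroup G] (y : ℕ → G) (n : ℕ) :
    ∑ k ∈ Icc 1 n, (y k - y (k - 1)) = y n - y 0 := by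
  induction n with
  | zero => simp
  | succ n ih => rw [sum_Icc_succ_top (by omega), ih, Nat.add_sub_cancel]; abel

theorem sum_mul_sum_mul_sub_eq_sub {R : Type*} [CommRing R] {a p : ℕ → R}
    (hap : ∀ m, ∑ x ∈ antidiagonal m, a x.1 * p x.2 = 1) (y : ℕ → R) (n : ℕ) :
    ∑ j ∈ Icc 1 n, p (n - j) * ∑ k ∈ Icc 1 j, a (j - k) * (y k - y (k - 1)) = y n - y 0 := by
  have hswap : ∀ f : ℕ → ℕ → R, ∑ j ∈ Icc 1 n, ∑ k ∈ Icc 1 j, f j k =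
      ∑ k ∈ Icc 1 n, ∑ j ∈ Icc k n, f j k :=
    fun f ↦ sum_comm' fun j k ↦ by simp only [mem_Icc]; omega
  have hinner : ∀ k ∈ Icc 1 n, ∑ j ∈ Icc k n, p (n - j) * (a (j - k) * (y k - y (k - 1))) =
      y k - y (k - 1) := by
    intro k hk
    have hkn : k ≤ n := (mem_Icc.mp hk).2
    calc ∑ j ∈ Icc k n, p (n - j) * (a (j - k) * (y k - y (k - 1)))
        = (∑ x ∈ antidiagonal (n - k), a x.1 * p x.2) * (y k - y (k - 1)) := by
          rw [← sum_Icc_eq_sum_antidiagonal (fun i l ↦ a i * p l) hkn, sum_mul]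
          exact sum_congr rfl fun _ _ ↦ by ring
      _ = y k - y (k - 1) := by rw [hap, one_mul]
  simp_rw [mul_sum]
  rw [hswap, sum_congr rfl hinner, sum_Icc_one_sub_pred_eq_sub]

theorem L1a_zero {α : ℝ} (hα : α < 1) : L1a α 0 = 1 := by
  simp [L1a, Real.zero_rpow (sub_ne_zero.mpr hα.ne')]

theorem L1p_succ (α : ℝ) (m : ℕ) :
    L1p α (m + 1) = ∑ x ∈ antidiagonal m, (L1a α x.1 - L1a α (x.1 + 1)) * L1p α x.2 := by
  rw [L1p, Fin.sum_univ_eq_sum_range (fun j ↦ (L1a α j - L1a α (j + 1)) * L1p α (m - j)),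
    Nat.sum_antidiagonal_eq_sum_range_succ (fun i l ↦ (L1a α i - L1a α (i + 1)) * L1p α l)]

theorem L1p_telescoping_general (α : ℝ) (hα1 : α < 1) (y : ℕ → ℝ) (n : ℕ) :
    ∑ j ∈ Finset.Icc 1 n, L1p α (n - j) *
        ∑ k ∈ Finset.Icc 1 j, L1a α (j - k) * (y k - y (k - 1))
      = y n - y 0 := by
  have hconv := sum_antidiagonal_mul_eq_one (L1a_zero hα1) (by rw [L1p]) (L1p_succ α)
  exact sum_mul_sum_mul_sub_eq_sub hconv y n

theorem L1p_telescoping (α : ℝ) (hα0 : 0 < α) (hα1 : α < 1) (y : ℕ → ℝ) (n : ℕ) :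
    ∑ j ∈ Finset.Icc 1 n, L1p α (n - j) *
        ∑ k ∈ Finset.Icc 1 j, L1a α (j - k) * (y k - y (k - 1))
      = y n - y 0 :=
  L1p_telescoping_general α hα1 y n
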